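/- Let Q* and Q̂ be functions on a metric space X, with Q* being L*-Lipschitz and Q̂ being L̂-Lipschitz, and let D ⊆ X be a nonempty finite set with |Q̂(x) - Q*(x)| ≤ ε on D. Define the penalized estimate Q̃(x) = Q̂(x) - λ·d(x, D). If x ∈ X satisfies d(x, D) ≥ d_min > 0 and λ ≥ L̂ + L* + ε/d_min, then Q̃(x) ≤ Q*(x). -/
import Mathlib


theorem geo_iql_pessimism {X : Type*} [MetricSpace X]
    (Qstar Qhat : X → ℝ) (Lstar Lhat ε lam dmin : ℝ)
    (hLstar : 0 ≤ Lstar) (hLhat : 0 ≤ Lhat) (hε : 0 ≤ ε) (hdmin : 0 < dmin)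
    (hQstar : ∀ x y : X, |Qstar x - Qstar y| ≤ Lstar * dist x y)
    (hQhat : ∀ x y : X, |Qhat x - Qhat y| ≤ Lhat * dist x y)
    (D : Finset X) (hD : D.Nonempty)
    (happrox : ∀ x ∈ D, |Qhat x - Qstar x| ≤ ε)
    (x : X)
    (hx : dmin ≤ Metric.infDist x (D : Set X))
    (hlam : Lhat + Lstar + ε / dmin ≤ lam) :
    Qhat x - lam * Metric.infDist x (D : Set X) ≤ Qstar x := by
  obtain ⟨y, hyD, hyd⟩ := ((D : Set X).toFinite.isCompact).exists_infDist_eq_dist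
    (by exact_mod_cast hD.to_set) x
  set I := Metric.infDist x (D : Set X) with hI
  have hId : I = dist x y := hyd
  have h1 : |Qhat x - Qhat y| ≤ Lhat * dist x y := hQhat x y
  have h2 : |Qstar y - Qstar x| ≤ Lstar * dist x y := by rw [dist_comm]; exact hQstar y x
  have h3 : |Qhat y - Qstar y| ≤ ε := happrox y hyD
  have hε' : ε ≤ ε / dmin * I := by
    rw [div_mul_eq_mul_div, le_div_iff₀ hdmin]
    exact mul_le_mul_of_nonneg_left hx hε
  have key : Qhat x - Qstar x ≤ (Lhat + Lstar) * I + ε := by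
    have := abs_le.1 h1
    have := abs_le.1 h2
    have := abs_le.1 h3
    rw [hId]; nlinarith
  have hlam' : (Lhat + Lstar) * I + ε ≤ lam * I := by
    have hI0 : 0 < I := lt_of_lt_of_le hdmin hx
    calc (Lhat + Lstar) * I + ε ≤ (Lhat + Lstar) * I + ε / dmin * I := by linarith
      _ = (Lhat + Lstar + ε / dmin) * I := by ring
      _ ≤ lam * I := mul_le_mul_of_nonneg_right hlam hI0.le
  linarith
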